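/- arXiv:2109.03061 — 6 statements merged into one kernel-verified Lean document; each statement's English description precedes it below -/
import Mathlib

section
/- A vector w ∈ ℝ^N is an interim payoff profile of some information structure (i.e., there exists Π with w_i = ∑_s π(s|θ_i) w(μ_s, θ_i) for all i) if and only if the pair (μ₀, w) lies in the convex hull of the graph of the adjusted payoff function ŵ : Δ(Θ) → ℝ^N defined by ŵ_i(μ) = (μ(θ_i)/μ₀(θ_i)) · w(μ, θ_i). -/
/-!
Along an information structure the signal probabilities `λ s = ∑ θ, μ₀ θ * π θ s` sum to one and
`λ s • (μ_s, ŵ μ_s) = (μ₀ θ * π θ s, π θ s * w μ_s θ)_θ`, so summing over signals writes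
`(μ₀, v)` as a countable convex combination of points of the graph of `ŵ`. In finite dimension
such a combination stays in the convex hull: otherwise a supporting functional at the point would
vanish on every point carrying positive weight, which span the whole space once the point is
moved to the origin. Conversely, a finite combination `∑ ν s • (μ s, ŵ (μ s)) = (μ₀, v)` is
realised by the splitting `π θ s = ν s * μ s θ / μ₀ θ`, whose posteriors are the `μ s`.
-/

open Set Filter Topology Pointwise

section SigmaConvexity

variable {ι E : Type*}

theorem mem_closure_convexHull_range_of_hasSum [AddCommGroup E] [Module ℝ E] [TopologicalSpace E]
    [IsTopologicalAddGroup E] [ContinuousSMul ℝ E] {p : ι → E} {l : ι → ℝ} {x : E}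
    (hl₀ : ∀ n, 0 ≤ l n) (hl₁ : HasSum l 1) (hx : HasSum (fun n => l n • p n) x) :
    x ∈ closure (convexHull ℝ (range p)) := by
  have hmass : Tendsto (fun F : Finset ι => F.centerMass l p) atTop (𝓝 x) := by
    simpa [Finset.centerMass] using (hl₁.inv₀ one_ne_zero).smul hx
  refine mem_closure_of_tendsto hmass ?_
  filter_upwards [hl₁.eventually (lt_mem_nhds zero_lt_one)] with F hF
  exact F.centerMass_mem_convexHull (fun n _ => hl₀ n) hF fun n _ => mem_range_self n

variable [NormedAddCommGroup E] [NormedSpace ℝ E] [FiniteDimensional ℝ E]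

theorem zero_mem_convexHull_range_of_hasSum_of_span_eq_top {q : ι → E} {l : ι → ℝ}
    (hl₀ : ∀ n, 0 < l n) (hl₁ : HasSum l 1) (hq : HasSum (fun n => l n • q n) 0)
    (hspan : Submodule.span ℝ (range q) = ⊤) : (0 : E) ∈ convexHull ℝ (range q) := by
  set C := convexHull ℝ (range q)
  have h0aff : (0 : E) ∈ affineSpan ℝ (range q) := by
    have hcl := (affineSpan ℝ (range q)).closed_of_finiteDimensional
    refine closure_minimal ?_ hcl
      (mem_closure_convexHull_range_of_hasSum (fun n => (hl₀ n).le) hl₁ hq)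
    rw [← affineSpan_convexHull]
    exact subset_affineSpan ℝ C
  have hint : (interior C).Nonempty := by
    rw [(convex_convexHull ℝ _).interior_nonempty_iff_affineSpan_eq_top, affineSpan_convexHull,
      ← affineSpan_insert_eq_affineSpan ℝ h0aff, ← SetLike.coe_set_eq, affineSpan_insert_zero,
      hspan, AffineSubspace.top_coe, Submodule.top_coe]
  by_contra h0
  obtain ⟨f, hf, hfC⟩ := geometric_hahn_banach_of_nonempty_interior_point
    (convex_convexHull ℝ _) (fun h => h0 (interior_subset h)) hint
  -- `f ≤ 0` on the `q n`, yet the positive combination `∑ l n * f (q n)` vanishes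
  have hfq : ∀ n, f (q n) = 0 := by
    have hle : ∀ n, f (q n) ≤ 0 := fun n => by
      simpa using hfC _ (subset_convexHull ℝ _ (mem_range_self n))
    have hsum : HasSum (fun n => -(l n * f (q n))) 0 := by
      simpa using (f.hasSum hq).neg
    have := (hasSum_zero_iff_of_nonneg fun n =>
      neg_nonneg.2 (mul_nonpos_of_nonneg_of_nonpos (hl₀ n).le (hle n))).1 hsum
    intro n
    simpa [(hl₀ n).ne'] using congrFun this n
  exact hf (ContinuousLinearMap.coe_injective (LinearMap.ext_on_range hspan (by simpa using hfq)))

theorem zero_mem_convexHull_range_of_hasSum {q : ι → E} {l : ι → ℝ}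
    (hl₀ : ∀ n, 0 < l n) (hl₁ : HasSum l 1) (hq : HasSum (fun n => l n • q n) 0) :
    (0 : E) ∈ convexHull ℝ (range q) := by
  set V := Submodule.span ℝ (range q)
  set q' : ι → V := codRestrict q V fun n => Submodule.subset_span (mem_range_self n)
  have hq' : HasSum (fun n => l n • q' n) 0 :=
    (Topology.IsInducing.subtypeVal.hasSum_iff (g := V.subtype) _ 0).1 hq
  have hspan : Submodule.span ℝ (range q') = ⊤ := by
    rw [range_codRestrict]; exact Submodule.span_span_coe_preimage
  have := mem_image_of_mem V.subtype
    (zero_mem_convexHull_range_of_hasSum_of_span_eq_top hl₀ hl₁ hq' hspan)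
  rwa [LinearMap.image_convexHull, ← range_comp] at this

theorem mem_convexHull_of_hasSum {A : Set E} {p : ι → E} {l : ι → ℝ} {x : E}
    (hl₀ : ∀ n, 0 ≤ l n) (hl₁ : HasSum l 1) (hp : ∀ n, l n ≠ 0 → p n ∈ A)
    (hx : HasSum (fun n => l n • p n) x) : x ∈ convexHull ℝ A := by
  let T := Function.support l
  have hlT : HasSum (fun n : T => l n) 1 :=
    (hasSum_subtype_iff_of_support_subset subset_rfl).2 hl₁
  have hqT : HasSum (fun n : T => l n • (p n - x)) 0 := by
    have hxT : HasSum (fun n : T => l n • p n) x :=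
      (hasSum_subtype_iff_of_support_subset (Function.support_smul_subset_left l p)).2 hx
    simpa [smul_sub] using hxT.sub (hlT.smul_const x)
  have h0 := zero_mem_convexHull_range_of_hasSum (fun n : T => (hl₀ n).lt_of_ne' n.2) hlT hqT
  have hsub : range (fun n : T => p n - x) ⊆ -x +ᵥ A := by
    rintro _ ⟨n, rfl⟩
    simpa [sub_eq_neg_add] using vadd_mem_vadd_set (a := -x) (hp n n.2)
  obtain ⟨a, ha, hax⟩ := (convexHull_vadd (𝕜 := ℝ) (-x) A ▸ convexHull_mono hsub h0 :)
  rwa [neg_add_eq_zero.1 hax]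

end SigmaConvexity

section InformationStructure

variable {Θ S : Type*}

section Bayes

variable [Fintype Θ] (μ₀ : Θ → ℝ) (π : Θ → S → ℝ)

def signalProb (s : S) : ℝ := ∑ θ, μ₀ θ * π θ s

-- Junk value `0` on null signals, which is why `mem_convexHull_of_hasSum` only asks for the
-- points of nonzero weight to lie in the set.
noncomputable def posterior (s : S) : Θ → ℝ := fun θ => μ₀ θ * π θ s / signalProb μ₀ π s

variable {μ₀ π}

theorem signalProb_nonneg (hμ₀ : ∀ θ, 0 ≤ μ₀ θ) (hπ : ∀ θ s, 0 ≤ π θ s) (s : S) :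
    0 ≤ signalProb μ₀ π s :=
  Finset.sum_nonneg fun θ _ => mul_nonneg (hμ₀ θ) (hπ θ s)

theorem hasSum_signalProb (hμ₀ : ∑ θ, μ₀ θ = 1) (hπ : ∀ θ, HasSum (π θ) 1) :
    HasSum (signalProb μ₀ π) 1 := by
  have := hasSum_sum fun θ (_ : θ ∈ Finset.univ) => (hπ θ).mul_left (μ₀ θ)
  rwa [Finset.sum_congr rfl fun θ _ => mul_one (μ₀ θ), hμ₀] at this

theorem signalProb_mul_posterior (hμ₀ : ∀ θ, 0 ≤ μ₀ θ) (hπ : ∀ θ s, 0 ≤ π θ s) (s : S) (θ : Θ) :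
    signalProb μ₀ π s * posterior μ₀ π s θ = μ₀ θ * π θ s := by
  by_cases h : signalProb μ₀ π s = 0
  · have := (Finset.sum_eq_zero_iff_of_nonneg fun θ _ => mul_nonneg (hμ₀ θ) (hπ θ s)).1 h θ
      (Finset.mem_univ θ)
    simp [h, this]
  · exact mul_div_cancel₀ _ h

theorem posterior_mem_stdSimplex (hμ₀ : ∀ θ, 0 ≤ μ₀ θ) (hπ : ∀ θ s, 0 ≤ π θ s) {s : S}
    (hs : signalProb μ₀ π s ≠ 0) : posterior μ₀ π s ∈ stdSimplex ℝ Θ :=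
  ⟨fun θ => div_nonneg (mul_nonneg (hμ₀ θ) (hπ θ s)) (signalProb_nonneg hμ₀ hπ s),
    by simp only [posterior, ← Finset.sum_div]; exact div_self hs⟩

theorem summable_mul_payoff_posterior {B : ℝ} {w : (Θ → ℝ) → Θ → ℝ} (hμ₀ : ∀ θ, 0 < μ₀ θ)
    (hπ : ∀ θ s, 0 ≤ π θ s) (hπ₁ : ∀ θ, HasSum (π θ) 1)
    (hw : ∀ μ ∈ stdSimplex ℝ Θ, ∀ θ, |w μ θ| ≤ B) (θ : Θ) :
    Summable fun s => π θ s * w (posterior μ₀ π s) θ := by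
  refine Summable.of_norm_bounded ((hπ₁ θ).summable.mul_right B) fun s => ?_
  rw [Real.norm_eq_abs, abs_mul, abs_of_nonneg (hπ θ s)]
  by_cases hs : signalProb μ₀ π s = 0
  · have := signalProb_mul_posterior (fun θ => (hμ₀ θ).le) hπ s θ
    rw [hs, zero_mul, zero_eq_mul] at this
    simp [this.resolve_left (hμ₀ θ).ne']
  · exact mul_le_mul_of_nonneg_left
      (hw _ (posterior_mem_stdSimplex (fun θ => (hμ₀ θ).le) hπ hs) θ) (hπ θ s)

end Bayes

section Splitting

noncomputable def splitting (μ₀ : Θ → ℝ) (ν : S → ℝ) (μ : S → Θ → ℝ) : Θ → S → ℝ :=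
  fun θ s => ν s * μ s θ / μ₀ θ

variable {μ₀ : Θ → ℝ} {ν : S → ℝ} {μ : S → Θ → ℝ}

theorem signalProb_splitting [Fintype Θ] (hμ₀ : ∀ θ, μ₀ θ ≠ 0) (hμ : ∀ s, ∑ θ, μ s θ = 1) (s : S) :
    signalProb μ₀ (splitting μ₀ ν μ) s = ν s := by
  simp only [signalProb, splitting, mul_div_cancel₀ _ (hμ₀ _), ← Finset.mul_sum, hμ, mul_one]

theorem posterior_splitting [Fintype Θ] (hμ₀ : ∀ θ, μ₀ θ ≠ 0) (hμ : ∀ s, ∑ θ, μ s θ = 1) {s : S}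
    (hs : ν s ≠ 0) : posterior μ₀ (splitting μ₀ ν μ) s = μ s := by
  ext θ
  rw [posterior, signalProb_splitting hμ₀ hμ, splitting, mul_div_cancel₀ _ (hμ₀ θ),
    mul_div_cancel_left₀ _ hs]

theorem hasSum_splitting [Fintype S] (hμ₀ : ∀ θ, μ₀ θ ≠ 0) (hbar : ∀ θ, ∑ s, ν s * μ s θ = μ₀ θ)
    (θ : Θ) : HasSum (splitting μ₀ ν μ θ) 1 := by
  convert hasSum_fintype (splitting μ₀ ν μ θ)
  simp only [splitting, ← Finset.sum_div, hbar, div_self (hμ₀ θ)]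

end Splitting

variable [Fintype Θ] {μ₀ : Θ → ℝ} {w : (Θ → ℝ) → Θ → ℝ}

def adjustedPayoffGraph (μ₀ : Θ → ℝ) (w : (Θ → ℝ) → Θ → ℝ) : Set ((Θ → ℝ) × (Θ → ℝ)) :=
  {p | ∃ μ : Θ → ℝ, (∀ θ, 0 ≤ μ θ) ∧ (∑ θ, μ θ = 1) ∧ p = (μ, fun θ => μ θ / μ₀ θ * w μ θ)}

noncomputable def interimPayoff (μ₀ : Θ → ℝ) (π : Θ → S → ℝ) (w : (Θ → ℝ) → Θ → ℝ) : Θ → ℝ :=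
  fun θ => ∑' s, π θ s * w (posterior μ₀ π s) θ

theorem mem_convexHull_adjustedPayoffGraph {π : Θ → S → ℝ} {B : ℝ} (hμ₀ : ∀ θ, 0 < μ₀ θ)
    (hμ₀₁ : ∑ θ, μ₀ θ = 1) (hw : ∀ μ ∈ stdSimplex ℝ Θ, ∀ θ, |w μ θ| ≤ B)
    (hπ : ∀ θ s, 0 ≤ π θ s) (hπ₁ : ∀ θ, HasSum (π θ) 1) :
    (μ₀, interimPayoff μ₀ π w) ∈ convexHull ℝ (adjustedPayoffGraph μ₀ w) := by
  have hμ₀' : ∀ θ, 0 ≤ μ₀ θ := fun θ => (hμ₀ θ).le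
  refine mem_convexHull_of_hasSum (signalProb_nonneg hμ₀' hπ) (hasSum_signalProb hμ₀₁ hπ₁)
    (p := fun s => (posterior μ₀ π s, fun θ => posterior μ₀ π s θ / μ₀ θ * w (posterior μ₀ π s) θ))
    (fun s hs => ⟨_, (posterior_mem_stdSimplex hμ₀' hπ hs).1,
      (posterior_mem_stdSimplex hμ₀' hπ hs).2, rfl⟩)
    ((Pi.hasSum.2 fun θ => ?_).prodMk (Pi.hasSum.2 fun θ => ?_))
  · simpa [signalProb_mul_posterior hμ₀' hπ] using (hπ₁ θ).mul_left (μ₀ θ)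
  · have hterm : ∀ s, signalProb μ₀ π s * (posterior μ₀ π s θ / μ₀ θ * w (posterior μ₀ π s) θ)
        = π θ s * w (posterior μ₀ π s) θ := fun s => by
      rw [← mul_assoc, mul_div_assoc', signalProb_mul_posterior hμ₀' hπ,
        mul_div_cancel_left₀ _ (hμ₀ θ).ne']
    simp only [smul_eq_mul, Pi.smul_apply, hterm]
    exact (summable_mul_payoff_posterior hμ₀ hπ hπ₁ hw θ).hasSum

theorem exists_interimPayoff_eq_of_mem_convexHull {v : Θ → ℝ} (hμ₀ : ∀ θ, 0 < μ₀ θ)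
    (h : (μ₀, v) ∈ convexHull ℝ (adjustedPayoffGraph μ₀ w)) :
    ∃ (S : Type) (_ : Fintype S) (π : Θ → S → ℝ),
      (∀ θ s, 0 ≤ π θ s) ∧ (∀ θ, HasSum (π θ) 1) ∧ interimPayoff μ₀ π w = v := by
  obtain ⟨S, _, ν, z, hν, -, hz, hsum⟩ := mem_convexHull_iff_exists_fintype.1 h
  choose μ hμ hμ₁ hz using hz
  obtain rfl : z = fun s => (μ s, fun θ => μ s θ / μ₀ θ * w (μ s) θ) := funext hz
  simp only [Prod.ext_iff, Prod.fst_sum, Prod.snd_sum, Prod.smul_mk, funext_iff,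
    Finset.sum_apply, Pi.smul_apply, smul_eq_mul] at hsum
  have hμ₀' : ∀ θ, μ₀ θ ≠ 0 := fun θ => (hμ₀ θ).ne'
  refine ⟨S, inferInstance, splitting μ₀ ν μ,
    fun θ s => div_nonneg (mul_nonneg (hν s) (hμ s θ)) (hμ₀ θ).le,
    hasSum_splitting hμ₀' hsum.1, funext fun θ => ?_⟩
  rw [interimPayoff, tsum_fintype, ← hsum.2 θ]
  refine Finset.sum_congr rfl fun s _ => ?_
  rcases eq_or_ne (ν s) 0 with hs | hs
  · simp [splitting, hs]
  · rw [posterior_splitting hμ₀' hμ₁ hs, splitting]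
    ring

end InformationStructure

theorem stmt2_general {N : ℕ} (μ₀ : Fin N → ℝ)
    (h₀pos : ∀ i, 0 < μ₀ i) (h₀sum : ∑ i, μ₀ i = 1)
    (w : (Fin N → ℝ) → Fin N → ℝ) (B : ℝ)
    (hw : ∀ μ : Fin N → ℝ, (∀ i, 0 ≤ μ i) → (∑ i, μ i = 1) → ∀ i, |w μ i| ≤ B)
    (v : Fin N → ℝ) :
    (∃ (S : Type) (_ : Countable S) (π : Fin N → S → ℝ),
        (∀ i s, 0 ≤ π i s) ∧ (∀ i, HasSum (π i) 1) ∧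
        ∀ i, v i = ∑' s, π i s *
          w (fun j => μ₀ j * π j s / ∑ k, μ₀ k * π k s) i)
      ↔ (μ₀, v) ∈ convexHull ℝ
          {p : (Fin N → ℝ) × (Fin N → ℝ) |
            ∃ μ : Fin N → ℝ, (∀ i, 0 ≤ μ i) ∧ (∑ i, μ i = 1) ∧
              p = (μ, fun i => μ i / μ₀ i * w μ i)} := by
  constructor
  · rintro ⟨S, -, π, hπ, hπ₁, hv⟩
    obtain rfl : v = interimPayoff μ₀ π w := funext hv
    exact mem_convexHull_adjustedPayoffGraph h₀pos h₀sum (fun μ hμ => hw μ hμ.1 hμ.2) hπ hπ₁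
  · intro h
    obtain ⟨S, _, π, hπ, hπ₁, rfl⟩ := exists_interimPayoff_eq_of_mem_convexHull h₀pos h
    exact ⟨S, inferInstance, π, hπ, hπ₁, fun θ => rfl⟩

/-- A vector `v ∈ ℝ^N` is the interim payoff profile of some information structure
iff `(μ₀, v)` lies in the convex hull of the graph of the adjusted payoff function
`ŵ(μ) i = (μ i / μ₀ i) * w μ i`. -/
theorem stmt2 {N : ℕ} (hN : 0 < N) (μ₀ : Fin N → ℝ)
    (h₀pos : ∀ i, 0 < μ₀ i) (h₀sum : ∑ i, μ₀ i = 1)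
    (w : (Fin N → ℝ) → Fin N → ℝ) (B : ℝ)
    (hw : ∀ μ : Fin N → ℝ, (∀ i, 0 ≤ μ i) → (∑ i, μ i = 1) → ∀ i, |w μ i| ≤ B)
    (v : Fin N → ℝ) :
    (∃ (S : Type) (_ : Countable S) (π : Fin N → S → ℝ),
        (∀ i s, 0 ≤ π i s) ∧ (∀ i, HasSum (π i) 1) ∧
        ∀ i, v i = ∑' s, π i s *
          w (fun j => μ₀ j * π j s / ∑ k, μ₀ k * π k s) i)
      ↔ (μ₀, v) ∈ convexHull ℝ
          {p : (Fin N → ℝ) × (Fin N → ℝ) |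
            ∃ μ : Fin N → ℝ, (∀ i, 0 ≤ μ i) ∧ (∑ i, μ i = 1) ∧
              p = (μ, fun i => μ i / μ₀ i * w μ i)} :=
  stmt2_general μ₀ h₀pos h₀sum w B hw v
end

section
/- The interim payoff set W, i.e., the set of all interim payoff profiles achievable by some information structure, is a convex subset of ℝ^N. -/
lemma myHasSum_elim {α β : Type*} {f : α → ℝ} {g : β → ℝ} {a b : ℝ}
    (hf : HasSum f a) (hg : HasSum g b) : HasSum (Sum.elim f g) (a + b) := by
  have h1 : HasSum (Sum.elim f g ∘ Sum.inl) a := hf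
  have h2 : HasSum (Sum.elim f g ∘ Sum.inr) b := hg
  exact HasSum.add_isCompl Set.isCompl_range_inl_range_inr
    (Sum.inl_injective.hasSum_range_iff.2 h1)
    (Sum.inr_injective.hasSum_range_iff.2 h2)

lemma aux_summable {N : ℕ} (μ₀ : Fin N → ℝ) (h₀pos : ∀ i, 0 < μ₀ i)
    (w : (Fin N → ℝ) → Fin N → ℝ) (B : ℝ)
    (hw : ∀ μ : Fin N → ℝ, (∀ i, 0 ≤ μ i) → (∑ i, μ i = 1) → ∀ i, |w μ i| ≤ B)
    {S : Type} (π : Fin N → S → ℝ) (hπ : ∀ i s, 0 ≤ π i s)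
    (hsum : ∀ i, HasSum (π i) 1) (i : Fin N) :
    Summable (fun s => π i s *
      w (fun j => μ₀ j * π j s / ∑ k, μ₀ k * π k s) i) := by
  apply Summable.of_abs
  refine Summable.of_nonneg_of_le (fun s => abs_nonneg _) ?_
    (((hsum i).summable).mul_left (max B 0))
  · intro s
    rcases eq_or_lt_of_le (hπ i s) with h0 | hpos
    · simp [← h0]
    · set D := ∑ k, μ₀ k * π k s with hD
      have hDpos : 0 < D := by
        have : 0 < μ₀ i * π i s := mul_pos (h₀pos i) hpos
        refine lt_of_lt_of_le this ?_
        exact Finset.single_le_sum (fun k _ => mul_nonneg (h₀pos k).le (hπ k s))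
          (Finset.mem_univ i)
      have hb := hw (fun j => μ₀ j * π j s / D)
        (fun j => div_nonneg (mul_nonneg (h₀pos j).le (hπ j s)) hDpos.le)
        (by rw [← Finset.sum_div]; exact div_self hDpos.ne') i
      rw [abs_mul, abs_of_nonneg (hπ i s), mul_comm]
      exact mul_le_mul (le_trans hb (le_max_left _ _)) le_rfl (hπ i s)
        (le_trans (abs_nonneg _) (le_trans hb (le_max_left _ _)))

/-- The interim payoff set `W` (all interim payoff profiles achievable by some
information structure) is a convex subset of `ℝ^N`. -/
theorem stmt4 {N : ℕ} (hN : 0 < N) (μ₀ : Fin N → ℝ)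
    (h₀pos : ∀ i, 0 < μ₀ i) (h₀sum : ∑ i, μ₀ i = 1)
    (w : (Fin N → ℝ) → Fin N → ℝ) (B : ℝ)
    (hw : ∀ μ : Fin N → ℝ, (∀ i, 0 ≤ μ i) → (∑ i, μ i = 1) → ∀ i, |w μ i| ≤ B) :
    Convex ℝ {v : Fin N → ℝ |
      ∃ (S : Type) (_ : Countable S) (π : Fin N → S → ℝ),
        (∀ i s, 0 ≤ π i s) ∧ (∀ i, HasSum (π i) 1) ∧
        ∀ i, v i = ∑' s, π i s *
          w (fun j => μ₀ j * π j s / ∑ k, μ₀ k * π k s) i} := by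
  rintro x ⟨S₁, hC₁, π₁, hπ₁, hs₁, hv₁⟩ y ⟨S₂, hC₂, π₂, hπ₂, hs₂, hv₂⟩ a b ha hb hab
  rcases eq_or_lt_of_le ha with h0 | ha'
  · have hb1 : b = 1 := by linarith
    have : a • x + b • y = y := by rw [← h0, hb1]; simp
    rw [this]
    exact ⟨S₂, hC₂, π₂, hπ₂, hs₂, hv₂⟩
  rcases eq_or_lt_of_le hb with h0 | hb'
  · have ha1 : a = 1 := by linarith
    have : a • x + b • y = x := by rw [← h0, ha1]; simp
    rw [this]
    exact ⟨S₁, hC₁, π₁, hπ₁, hs₁, hv₁⟩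
  refine ⟨S₁ ⊕ S₂, inferInstance,
    fun i => Sum.elim (fun s => a * π₁ i s) (fun s => b * π₂ i s), ?_, ?_, ?_⟩
  · rintro i (s | s)
    · exact mul_nonneg ha (hπ₁ i s)
    · exact mul_nonneg hb (hπ₂ i s)
  · intro i
    have := myHasSum_elim ((hs₁ i).mul_left a) ((hs₂ i).mul_left b)
    simpa [hab] using this
  · intro i
    -- posterior identities
    have post₁ : ∀ s : S₁, (fun j => μ₀ j * (a * π₁ j s) / ∑ k, μ₀ k * (a * π₁ k s))
        = (fun j => μ₀ j * π₁ j s / ∑ k, μ₀ k * π₁ k s) := by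
      intro s; funext j
      have hden : (∑ k, μ₀ k * (a * π₁ k s)) = a * ∑ k, μ₀ k * π₁ k s := by
        rw [Finset.mul_sum]; congr 1; funext k; ring
      rw [hden, show μ₀ j * (a * π₁ j s) = a * (μ₀ j * π₁ j s) by ring,
        mul_div_mul_left _ _ ha'.ne']
    have post₂ : ∀ s : S₂, (fun j => μ₀ j * (b * π₂ j s) / ∑ k, μ₀ k * (b * π₂ k s))
        = (fun j => μ₀ j * π₂ j s / ∑ k, μ₀ k * π₂ k s) := by
      intro s; funext j
      have hden : (∑ k, μ₀ k * (b * π₂ k s)) = b * ∑ k, μ₀ k * π₂ k s := by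
        rw [Finset.mul_sum]; congr 1; funext k; ring
      rw [hden, show μ₀ j * (b * π₂ j s) = b * (μ₀ j * π₂ j s) by ring,
        mul_div_mul_left _ _ hb'.ne']
    have h₁ : HasSum (fun s : S₁ => π₁ i s *
        w (fun j => μ₀ j * π₁ j s / ∑ k, μ₀ k * π₁ k s) i) (x i) := by
      rw [hv₁ i]
      exact (aux_summable μ₀ h₀pos w B hw π₁ hπ₁ hs₁ i).hasSum
    have h₂ : HasSum (fun s : S₂ => π₂ i s *
        w (fun j => μ₀ j * π₂ j s / ∑ k, μ₀ k * π₂ k s) i) (y i) := by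
      rw [hv₂ i]
      exact (aux_summable μ₀ h₀pos w B hw π₂ hπ₂ hs₂ i).hasSum
    have hcomb := myHasSum_elim (h₁.mul_left a) (h₂.mul_left b)
    have heq : (Sum.elim (fun s : S₁ => a * (π₁ i s *
          w (fun j => μ₀ j * π₁ j s / ∑ k, μ₀ k * π₁ k s) i))
        (fun s : S₂ => b * (π₂ i s *
          w (fun j => μ₀ j * π₂ j s / ∑ k, μ₀ k * π₂ k s) i)))
        = fun s : S₁ ⊕ S₂ =>
          (Sum.elim (fun s => a * π₁ i s) (fun s => b * π₂ i s)) s *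
          w (fun j => μ₀ j * (Sum.elim (fun s => a * π₁ j s)
            (fun s => b * π₂ j s)) s /
            ∑ k, μ₀ k * (Sum.elim (fun s => a * π₁ k s)
              (fun s => b * π₂ k s)) s) i := by
      funext s
      cases s with
      | inl s => simp only [Sum.elim_inl]; rw [post₁ s]; ring
      | inr s => simp only [Sum.elim_inr]; rw [post₂ s]; ring
    rw [heq] at hcomb
    have := hcomb.tsum_eq
    simp only [Pi.add_apply, Pi.smul_apply, smul_eq_mul]
    rw [← this]
end

section
/- (Truth-drifting) Let β ∈ [0,1]^N with μ₀ᵀβ > 0 represent conditional probabilities of an event X given each type, and let P = D₀C be derived from a completely positive matrix C with C·e = μ₀. Then ∑_i (μ₀(θ_i)β_i / μ₀ᵀβ) · (P β)_i ≥ μ₀ᵀβ; equivalently, the average posterior probability of X conditional on X being true is at least its prior probability. -/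
def CompletelyPositive {N : ℕ} (C : Matrix (Fin N) (Fin N) ℝ) : Prop :=
  ∃ (M : ℕ) (x : Fin M → Fin N → ℝ), (∀ m i, 0 ≤ x m i) ∧
    C = ∑ m, Matrix.vecMulVec (x m) (x m)

lemma quad_form_eq {N M : ℕ} (x : Fin M → Fin N → ℝ) (u v : Fin N → ℝ) :
    ∑ i, ∑ j, u i * (∑ m, Matrix.vecMulVec (x m) (x m)) i j * v j
      = ∑ m, (∑ i, x m i * u i) * (∑ j, x m j * v j) := by
  have h : ∀ m : Fin M, (∑ i, x m i * u i) * (∑ j, x m j * v j)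
      = ∑ i, ∑ j, u i * (x m i * x m j) * v j := by
    intro m
    rw [Finset.sum_mul_sum]
    exact Finset.sum_congr rfl fun i _ => Finset.sum_congr rfl fun j _ => by ring
  simp only [h, Matrix.sum_apply, Matrix.vecMulVec_apply, Finset.mul_sum, Finset.sum_mul]
  calc ∑ i, ∑ j, ∑ m, u i * (x m i * x m j) * v j
      = ∑ i, ∑ m, ∑ j, u i * (x m i * x m j) * v j :=
        Finset.sum_congr rfl fun i _ => Finset.sum_comm
    _ = ∑ m, ∑ i, ∑ j, u i * (x m i * x m j) * v j := Finset.sum_comm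

/-- Truth-drifting: conditional on an event `X` (with conditional probabilities
`β` given the types), the average posterior probability of `X` is at least its
prior probability `μ₀ᵀ β`. -/
theorem stmt10 {N : ℕ} (μ₀ β : Fin N → ℝ)
    (hpos : ∀ i, 0 < μ₀ i) (hsum : ∑ i, μ₀ i = 1)
    (hβ : ∀ i, 0 ≤ β i ∧ β i ≤ 1) (hβpos : 0 < ∑ i, μ₀ i * β i)
    (C : Matrix (Fin N) (Fin N) ℝ) (hCP : CompletelyPositive C)
    (hCe : C.mulVec (fun _ => 1) = μ₀)
    (P : Matrix (Fin N) (Fin N) ℝ)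
    (hP : P = Matrix.diagonal (fun i => (μ₀ i)⁻¹) * C) :
    (∑ j, μ₀ j * β j) ≤
      ∑ i, (μ₀ i * β i / ∑ j, μ₀ j * β j) * P.mulVec β i := by
  obtain ⟨M, x, hx, hC⟩ := hCP
  set s : ℝ := ∑ j, μ₀ j * β j with hs
  have hμ : ∀ j, μ₀ j = ∑ k, C j k * 1 := by
    intro j
    rw [← hCe]
    simp [Matrix.mulVec, dotProduct]
  -- rewrite the RHS
  have hRHS : ∑ i, (μ₀ i * β i / s) * P.mulVec β i
      = (∑ i, ∑ j, β i * C i j * β j) / s := by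
    rw [Finset.sum_div]
    refine Finset.sum_congr rfl fun i _ => ?_
    have hPi : P.mulVec β i = (μ₀ i)⁻¹ * ∑ j, C i j * β j := by
      simp only [hP, Matrix.mulVec, dotProduct, Matrix.diagonal_mul, mul_assoc,
        ← Finset.mul_sum]
    have hT : ∑ j, β i * C i j * β j = β i * ∑ j, C i j * β j := by
      rw [Finset.mul_sum]
      exact Finset.sum_congr rfl fun j _ => by ring
    rw [hPi, hT]
    have hne : μ₀ i ≠ 0 := (hpos i).ne'
    field_simp
  rw [hRHS, le_div_iff₀ hβpos]
  -- key quantities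
  have hquad : ∑ i, ∑ j, β i * C i j * β j = ∑ m, (∑ i, x m i * β i) ^ 2 := by
    rw [hC, quad_form_eq]
    exact Finset.sum_congr rfl fun m _ => (sq _).symm
  have hsval : s = ∑ m, (∑ i, x m i * β i) * (∑ j, x m j * 1) := by
    have h1 : s = ∑ j, ∑ k, β j * C j k * 1 := by
      rw [hs]
      refine Finset.sum_congr rfl fun j _ => ?_
      rw [hμ j, Finset.sum_mul]
      exact Finset.sum_congr rfl fun k _ => by ring
    rw [h1, hC, quad_form_eq]
  have hone : ∑ m, (∑ j, x m j * 1) ^ 2 = 1 := by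
    calc ∑ m, (∑ j, x m j * 1) ^ 2
        = ∑ m, (∑ i, x m i * 1) * (∑ j, x m j * 1) :=
          Finset.sum_congr rfl fun m _ => sq _
      _ = ∑ j, ∑ k, (1 : ℝ) * C j k * 1 := by rw [hC, quad_form_eq]
      _ = ∑ j, μ₀ j := by
          refine Finset.sum_congr rfl fun j _ => ?_
          rw [hμ j]
          exact Finset.sum_congr rfl fun k _ => by ring
      _ = 1 := hsum
  have hCS := Finset.sum_mul_sq_le_sq_mul_sq Finset.univ
    (fun m => ∑ i, x m i * β i) (fun m => ∑ j, x m j * 1)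
  calc s * s = s ^ 2 := (sq s).symm
    _ = (∑ m, (∑ i, x m i * β i) * (∑ j, x m j * 1)) ^ 2 := by rw [← hsval]
    _ ≤ (∑ m, (∑ i, x m i * β i) ^ 2) * ∑ m, (∑ j, x m j * 1) ^ 2 := hCS
    _ = ∑ m, (∑ i, x m i * β i) ^ 2 := by rw [hone, mul_one]
    _ = ∑ i, ∑ j, β i * C i j * β j := hquad.symm
end

section
/- Suppose all types are equally likely (μ₀(θ_i) = 1/N for all i). Then every interim payoff profile w in the linear reputation setting satisfies w = Pρ for a symmetric doubly stochastic matrix P; in particular, ρ majorizes w. -/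
/-! With a uniform prior, `D₀ = N • 1` and `P = N • C`. A completely positive `C` is entrywise
nonnegative and symmetric, and the prior constraint `C e = μ₀` makes its row sums `1 / N`;
by symmetry the column sums are `1 / N` as well, so `P` is doubly stochastic. -/

namespace CompletelyPositive

variable {N : ℕ} {C : Matrix (Fin N) (Fin N) ℝ}

theorem nonneg (hC : CompletelyPositive C) (i j : Fin N) : 0 ≤ C i j := by
  obtain ⟨M, x, hx, rfl⟩ := hC
  simp only [Matrix.sum_apply, Matrix.vecMulVec_apply]
  exact Finset.sum_nonneg fun m _ => mul_nonneg (hx m i) (hx m j)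

theorem isSymm (hC : CompletelyPositive C) : C.IsSymm := by
  obtain ⟨M, x, -, rfl⟩ := hC
  simp only [Matrix.IsSymm, Matrix.transpose_sum, Matrix.transpose_vecMulVec]

end CompletelyPositive

theorem Matrix.IsSymm.sum_col_eq_sum_row {n α : Type*} [Fintype n] [AddCommMonoid α]
    {A : Matrix n n α} (hA : A.IsSymm) (j : n) : ∑ i, A i j = ∑ i, A j i :=
  Finset.sum_congr rfl fun i _ => hA.apply j i

theorem Matrix.sum_smul_apply_eq_one {n α : Type*} [Fintype n] [DivisionSemiring α]
    {A : Matrix n n α} {c : α} (hc : c ≠ 0) (hA : A.mulVec (fun _ => 1) = fun _ => c⁻¹) (i : n) :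
    ∑ j, (c • A) i j = 1 := by
  have hrow : ∑ j, A i j = c⁻¹ := by simpa [Matrix.mulVec, dotProduct] using congrFun hA i
  simp only [Matrix.smul_apply, smul_eq_mul, ← Finset.mul_sum, hrow, mul_inv_cancel₀ hc]

theorem stmt13_general {N : ℕ} (ρ v : Fin N → ℝ)
    (hv : ∃ C : Matrix (Fin N) (Fin N) ℝ,
        CompletelyPositive C ∧
        C.mulVec (fun _ => 1) = (fun _ => (N : ℝ)⁻¹) ∧
        v = (Matrix.diagonal (fun _ => (N : ℝ)) * C).mulVec ρ) :
    ∃ P : Matrix (Fin N) (Fin N) ℝ,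
      (∀ i j, 0 ≤ P i j) ∧ (∀ i, ∑ j, P i j = 1) ∧ (∀ j, ∑ i, P i j = 1) ∧
      P.IsSymm ∧ v = P.mulVec ρ := by
  obtain ⟨C, hC, hrow, rfl⟩ := hv
  have hsymm : ((N : ℝ) • C).IsSymm := hC.isSymm.smul _
  have hrowSum (i : Fin N) : ∑ j, ((N : ℝ) • C) i j = 1 :=
    Matrix.sum_smul_apply_eq_one (Nat.cast_ne_zero.mpr i.pos.ne') hrow i
  refine ⟨(N : ℝ) • C, fun i j => ?_, hrowSum, fun j => ?_, hsymm, ?_⟩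
  · exact mul_nonneg (Nat.cast_nonneg N) (hC.nonneg i j)
  · rw [hsymm.sum_col_eq_sum_row, hrowSum]
  · rw [Matrix.smul_eq_diagonal_mul]

/-- With a uniform prior, every interim payoff profile in the linear reputation
setting equals `P ρ` for a symmetric doubly stochastic matrix `P`; in particular
`ρ` majorizes it. -/
theorem stmt13 {N : ℕ} (hN : 0 < N) (ρ v : Fin N → ℝ)
    (hv : ∃ C : Matrix (Fin N) (Fin N) ℝ,
        CompletelyPositive C ∧
        C.mulVec (fun _ => 1) = (fun _ => (N : ℝ)⁻¹) ∧
        v = (Matrix.diagonal (fun _ => (N : ℝ)) * C).mulVec ρ) :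
    ∃ P : Matrix (Fin N) (Fin N) ℝ,
      (∀ i j, 0 ≤ P i j) ∧ (∀ i, ∑ j, P i j = 1) ∧ (∀ j, ∑ i, P i j = 1) ∧
      P.IsSymm ∧ v = P.mulVec ρ :=
  stmt13_general ρ v hv
end

section
/- For N = 2 types with prior μ₀ = (1/2, 1/2) and reputation vector ρ = (0,1), the interim payoff set equals the segment {(w₁, w₂) : w₁ + w₂ = 1, 0 ≤ w₁ ≤ 1/2} joining the no-information profile (1/2, 1/2) and the full-information profile (0, 1). -/
/-- For `N = 2`, prior `μ₀ = (1/2, 1/2)` and reputation vector `ρ = (0, 1)`, the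
interim payoff set is the segment `{(w₁, w₂) : w₁ + w₂ = 1, 0 ≤ w₁ ≤ 1/2}`. -/
theorem stmt14 :
    {v : Fin 2 → ℝ | ∃ C : Matrix (Fin 2) (Fin 2) ℝ,
        CompletelyPositive C ∧
        C.mulVec (fun _ => 1) = (fun _ => (1 : ℝ) / 2) ∧
        v = (Matrix.diagonal (fun _ => (2 : ℝ)) * C).mulVec ![0, 1]}
      = {v : Fin 2 → ℝ | v 0 + v 1 = 1 ∧ 0 ≤ v 0 ∧ v 0 ≤ 1 / 2} := by
  ext v
  simp only [Set.mem_setOf_eq]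
  constructor
  · rintro ⟨C, ⟨M, x, hx, hC⟩, hrow, hv⟩
    have hentry : ∀ i j, C i j = ∑ m, x m i * x m j := by
      intro i j
      rw [hC]
      simp [Matrix.sum_apply, Matrix.vecMulVec_apply]
    have hsym : C 0 1 = C 1 0 := by
      rw [hentry, hentry]
      exact Finset.sum_congr rfl (fun m _ => mul_comm _ _)
    have hnn : 0 ≤ C 0 1 := by
      rw [hentry]
      exact Finset.sum_nonneg fun m _ => mul_nonneg (hx m 0) (hx m 1)
    have hineq : 2 * C 0 1 ≤ C 0 0 + C 1 1 := by
      rw [hentry, hentry, hentry, Finset.mul_sum, ← Finset.sum_add_distrib]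
      exact Finset.sum_le_sum fun m _ => by nlinarith [sq_nonneg (x m 0 - x m 1)]
    have h0 : C 0 0 + C 0 1 = 1 / 2 := by
      have := congrFun hrow 0
      simpa [Matrix.mulVec, dotProduct, Fin.sum_univ_two] using this
    have h1 : C 1 0 + C 1 1 = 1 / 2 := by
      have := congrFun hrow 1
      simpa [Matrix.mulVec, dotProduct, Fin.sum_univ_two] using this
    have hv0 : v 0 = 2 * C 0 1 := by
      have := congrFun hv 0
      simp [Matrix.mulVec, dotProduct, Fin.sum_univ_two, Matrix.mul_apply,
        Matrix.diagonal] at this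
      linarith [this]
    have hv1 : v 1 = 2 * C 1 1 := by
      have := congrFun hv 1
      simp [Matrix.mulVec, dotProduct, Fin.sum_univ_two, Matrix.mul_apply,
        Matrix.diagonal] at this
      linarith [this]
    refine ⟨by linarith, by linarith, by linarith⟩
  · rintro ⟨hsum, h0, h1⟩
    set t := v 0 with ht
    have hb : (0:ℝ) ≤ t / 2 := by linarith
    have ha : (0:ℝ) ≤ (1 - 2 * t) / 2 := by linarith
    obtain ⟨b, hbnn, hbsq⟩ : ∃ b : ℝ, 0 ≤ b ∧ b * b = t / 2 :=
      ⟨Real.sqrt (t / 2), Real.sqrt_nonneg _, Real.mul_self_sqrt hb⟩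
    obtain ⟨a, hann, hasq⟩ : ∃ a : ℝ, 0 ≤ a ∧ a * a = (1 - 2 * t) / 2 :=
      ⟨Real.sqrt ((1 - 2 * t) / 2), Real.sqrt_nonneg _, Real.mul_self_sqrt ha⟩
    refine ⟨!![(1 - t) / 2, t / 2; t / 2, (1 - t) / 2], ⟨3,
      ![(fun _ => b), ![a, 0], ![0, a]], ?_, ?_⟩, ?_, ?_⟩
    · intro m i
      fin_cases m <;> fin_cases i <;> simp <;> assumption
    · funext i j
      fin_cases i <;> fin_cases j <;>
        · simp [Fin.sum_univ_three, Matrix.sum_apply, Matrix.vecMulVec_apply]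
          nlinarith [hbsq, hasq]
    · funext i
      fin_cases i <;>
        · simp [Matrix.mulVec, dotProduct, Fin.sum_univ_two]
          ring
    · funext i
      fin_cases i <;>
        · simp [Matrix.mulVec, dotProduct, Fin.sum_univ_two, Matrix.mul_apply,
            Matrix.diagonal]
          linarith
end

section
/- (Blackwell monotonicity of the interim payoff set) If the data source (D′, φ′) is a garbling of (D, φ) — i.e., there is a stochastic matrix G : D → Δ(D′) with φ′(d′ | c, ω) = ∑_d G(d′|d) φ(d | c, ω) for all (c, ω) — then the interim payoff set attainable under (D′, φ′) is contained in the interim payoff set attainable under (D, φ): W(D′, φ′) ⊆ W(D, φ). -/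
/-- The interim payoff set `W(D, φ)` for a data source `(D, φ)`: the set of
cohort-indexed vectors of expected payoffs `(E_Π[payoff ∣ c])_{c}` over all
countable-signal information structures `π : D → Δ(S)`, where the payoff at a
signal depends on the induced posterior over the states `Ω`. -/
def interimSet {C Ω : Type*} [Fintype C] [Fintype Ω]
    (PCΩ : C → Ω → ℝ) (w : (Ω → ℝ) → Ω → C → ℝ)
    (D : Type) [Fintype D] (φ : C → Ω → D → ℝ) : Set (C → ℝ) :=
  {v | ∃ (S : Type) (_ : Countable S) (π : D → S → ℝ),
    (∀ d s, 0 ≤ π d s) ∧ (∀ d, HasSum (π d) 1) ∧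
    ∀ c, v c =
      (∑' s, ∑ ω, ∑ d, PCΩ c ω * φ c ω d * π d s *
          w (fun ω' => (∑ c', ∑ d', PCΩ c' ω' * φ c' ω' d' * π d' s) /
              (∑ c', ∑ ω'', ∑ d', PCΩ c' ω'' * φ c' ω'' d' * π d' s)) ω c)
        / (∑ ω, PCΩ c ω)}

/-- Blackwell monotonicity: if the data source `(D', φ')` is a garbling of
`(D, φ)` via a stochastic matrix `G`, then `W(D', φ') ⊆ W(D, φ)`. -/
theorem stmt19 {C Ω : Type*} [Fintype C] [Fintype Ω]
    (PCΩ : C → Ω → ℝ) (hnn : ∀ c ω, 0 ≤ PCΩ c ω)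
    (hsum : ∑ c, ∑ ω, PCΩ c ω = 1) (hc : ∀ c, 0 < ∑ ω, PCΩ c ω)
    (w : (Ω → ℝ) → Ω → C → ℝ)
    (D D' : Type) [Fintype D] [Fintype D']
    (φ : C → Ω → D → ℝ) (hφnn : ∀ c ω d, 0 ≤ φ c ω d)
    (hφsum : ∀ c ω, ∑ d, φ c ω d = 1)
    (φ' : C → Ω → D' → ℝ) (hφ'nn : ∀ c ω d', 0 ≤ φ' c ω d')
    (hφ'sum : ∀ c ω, ∑ d', φ' c ω d' = 1)
    (G : D → D' → ℝ) (hGnn : ∀ d d', 0 ≤ G d d')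
    (hGsum : ∀ d, ∑ d', G d d' = 1)
    (hgarble : ∀ c ω d', φ' c ω d' = ∑ d, G d d' * φ c ω d) :
    interimSet PCΩ w D' φ' ⊆ interimSet PCΩ w D φ := by
  rintro v ⟨S, hS, π', hπ'nn, hπ'sum, hv⟩
  refine ⟨S, hS, fun d s => ∑ d', G d d' * π' d' s, ?_, ?_, ?_⟩
  · intro d s
    exact Finset.sum_nonneg fun d' _ => mul_nonneg (hGnn d d') (hπ'nn d' s)
  · intro d
    have h : HasSum (fun s => ∑ d', G d d' * π' d' s) (∑ d', G d d' * 1) :=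
      hasSum_sum fun d' _ => (hπ'sum d').mul_left (G d d')
    simpa [hGsum d] using h
  · intro c
    have key : ∀ (c : C) (ω : Ω) (s : S),
        ∑ d, PCΩ c ω * φ c ω d * ∑ d', G d d' * π' d' s
          = ∑ d', PCΩ c ω * φ' c ω d' * π' d' s := by
      intro c ω s
      simp only [hgarble, Finset.mul_sum, Finset.sum_mul]
      rw [Finset.sum_comm]
      exact Finset.sum_congr rfl fun d _ => Finset.sum_congr rfl fun d' _ => by ring
    rw [hv c]
    congr 1
    apply tsum_congr
    intro s
    apply Finset.sum_congr rfl
    intro ω _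
    have hkey2 : ∀ (K : ℝ),
        ∑ d, PCΩ c ω * φ c ω d * (∑ d', G d d' * π' d' s) * K
          = (∑ d', PCΩ c ω * φ' c ω d' * π' d' s) * K := by
      intro K
      rw [← Finset.sum_mul, key]
    have hw : (fun ω' => (∑ c', ∑ d, PCΩ c' ω' * φ c' ω' d * ∑ d'', G d d'' * π' d'' s) /
              (∑ c', ∑ ω'', ∑ d, PCΩ c' ω'' * φ c' ω'' d * ∑ d'', G d d'' * π' d'' s))
        = (fun ω' => (∑ c', ∑ d', PCΩ c' ω' * φ' c' ω' d' * π' d' s) /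
              (∑ c', ∑ ω'', ∑ d', PCΩ c' ω'' * φ' c' ω'' d' * π' d' s)) := by
      funext ω'
      simp only [key]
    rw [hkey2, ← Finset.sum_mul, hw]
end
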